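/- Let C be a coalgebra, I₁ and I₂ coideals of C, and A a right C-comodule (with A an algebra and Δ_A left A-linear as needed to define coinvariants). If the quotient coalgebras C/I₁ and C/I₂ cogenerate C (i.e. the intersection over all finite multi-indices (i₁,…,i_{n+1}) ∈ {1,2}^{n+1} of the kernels of ℘_{(i)} := (π_{i₁}⊗…⊗π_{i_{n+1}}) ∘ Δ_n is zero), then A^{co C} = A^{co (C/I₁)} ∩ A^{co (C/I₂)}. -/

import Mathlib

open TensorProduct LinearMap Coalgebra

variable {k C : Type} [Field k] [AddCommGroup C] [Module k C] [Coalgebra k C]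

/-- The iterated tensor product `C/I_{i} ⊗ C/I_{i₁} ⊗ … ⊗ C/I_{iₙ}` attached to a
nonempty multi-index `i :: l` with entries in `{1,2}` (encoded by `Bool`). -/
noncomputable def multiTensor (k C : Type) [Field k] [AddCommGroup C] [Module k C]
    (I : Bool → Submodule k C) : Bool → List Bool → ModuleCat k
  | i, [] => ModuleCat.of k (C ⧸ I i)
  | i, j :: l => ModuleCat.of k ((C ⧸ I i) ⊗[k] (multiTensor k C I j l))

/-- The map `℘_{(i)} = (π_{i₁} ⊗ … ⊗ π_{iₙ₊₁}) ∘ Δ_n : C → C/I_{i₁} ⊗ … ⊗ C/I_{iₙ₊₁}`. -/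
noncomputable def multiProj (I : Bool → Submodule k C) :
    (i : Bool) → (l : List Bool) → C →ₗ[k] multiTensor k C I i l
  | i, [] => (I i).mkQ
  | i, j :: l =>
      TensorProduct.map (I i).mkQ (multiProj I j l) ∘ₗ comul (R := k)


/-! Coinvariance of `b` says that `ρ` intertwines `φ = (b * ·)` on `A` with `φ ⊗ id` on `A ⊗ C`,
and the same for `C/I` with `(id ⊗ π) ∘ ρ` in place of `ρ`. By coassociativity, if `g : C → M` and
`h : C → N` both intertwine in this sense, so does `(g ⊗ h) ∘ Δ`; hence coinvariance for `C/I₁` and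
`C/I₂` propagates to all the maps `℘_{(i)}`. As `A` is free over `k`, tensoring with `A` keeps the
family `℘_{(i)}` jointly injective, which gives coinvariance for `C` itself. -/

section Cogeneration

variable {R A V : Type*} {ι : Type*} {M : ι → Type*}

theorem TensorProduct.eq_zero_of_forall_lTensor_eq_zero [CommSemiring R]
    [AddCommMonoid A] [Module R A] [Module.Free R A] [AddCommMonoid V] [Module R V]
    [∀ i, AddCommMonoid (M i)] [∀ i, Module R (M i)]
    (f : ∀ i, V →ₗ[R] M i) (hf : ∀ x, (∀ i, f i x = 0) → x = 0)
    (y : A ⊗[R] V) (hy : ∀ i, (f i).lTensor A y = 0) : y = 0 := by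
  obtain ⟨c, rfl⟩ := TensorProduct.eq_repr_basis_left (Module.Free.chooseBasis R A) y
  have hfc : ∀ i, c.mapRange (f i) (map_zero _) = 0 := fun i ↦
    TensorProduct.sum_tmul_basis_left_eq_zero _ _ <| by
      rw [Finsupp.sum_mapRange_index (by simp)]
      simpa [Finsupp.sum, map_sum] using hy i
  have hc : c = 0 := Finsupp.ext fun j ↦ hf _ fun i ↦ by simpa using DFunLike.congr_fun (hfc i) j
  simp [hc]

theorem LinearMap.ext_of_forall_lTensor_comp_eq [CommRing R]
    [AddCommGroup A] [Module R A] [Module.Free R A] [AddCommGroup V] [Module R V]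
    [∀ i, AddCommGroup (M i)] [∀ i, Module R (M i)] {B : Type*} [AddCommGroup B] [Module R B]
    (f : ∀ i, V →ₗ[R] M i) (hf : ∀ x, (∀ i, f i x = 0) → x = 0)
    {u v : B →ₗ[R] A ⊗[R] V} (h : ∀ i, (f i).lTensor A ∘ₗ u = (f i).lTensor A ∘ₗ v) :
    u = v := by
  ext b
  rw [← sub_eq_zero]
  refine TensorProduct.eq_zero_of_forall_lTensor_eq_zero f hf _ fun i ↦ ?_
  rw [map_sub, sub_eq_zero, ← comp_apply, h i, comp_apply]

end Cogeneration

section Comodule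

variable {R A D M N : Type*} [CommSemiring R] [AddCommMonoid A] [Module R A]
  [AddCommMonoid D] [Module R D] [CoalgebraStruct R D]
  [AddCommMonoid M] [Module R M] [AddCommMonoid N] [Module R N]
  {ρ : A →ₗ[R] A ⊗[R] D}

theorem lTensor_map_comul_comp_eq (hcoassoc : (comul (R := R) (A := D)).lTensor A ∘ₗ ρ
      = (TensorProduct.assoc R A D D).toLinearMap ∘ₗ ρ.rTensor D ∘ₗ ρ)
    (g : D →ₗ[R] M) (h : D →ₗ[R] N) :
    (map g h ∘ₗ comul).lTensor A ∘ₗ ρ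
      = (TensorProduct.assoc R A M N).toLinearMap ∘ₗ
          (g.lTensor A ∘ₗ ρ).rTensor N ∘ₗ h.lTensor A ∘ₗ ρ := by
  rw [lTensor_comp, comp_assoc, hcoassoc, ← comp_assoc _ (TensorProduct.assoc R A D D).toLinearMap,
    lTensor, map_map_comp_assoc_eq, comp_assoc, ← comp_assoc ρ, map_comp_rTensor,
    ← rTensor_comp_lTensor]
  rfl

theorem lTensor_map_comul_comp_comm (hcoassoc : (comul (R := R) (A := D)).lTensor A ∘ₗ ρ
      = (TensorProduct.assoc R A D D).toLinearMap ∘ₗ ρ.rTensor D ∘ₗ ρ)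
    {φ : A →ₗ[R] A} {g : D →ₗ[R] M} {h : D →ₗ[R] N}
    (hg : g.lTensor A ∘ₗ ρ ∘ₗ φ = φ.rTensor M ∘ₗ g.lTensor A ∘ₗ ρ)
    (hh : h.lTensor A ∘ₗ ρ ∘ₗ φ = φ.rTensor N ∘ₗ h.lTensor A ∘ₗ ρ) :
    (map g h ∘ₗ comul).lTensor A ∘ₗ ρ ∘ₗ φ
      = φ.rTensor (M ⊗[R] N) ∘ₗ (map g h ∘ₗ comul).lTensor A ∘ₗ ρ := by
  have hassoc : (TensorProduct.assoc R A M N).toLinearMap ∘ₗ (φ.rTensor M).rTensor N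
      = φ.rTensor (M ⊗[R] N) ∘ₗ (TensorProduct.assoc R A M N).toLinearMap := by
    rw [rTensor, rTensor, rTensor, ← map_id, map_map_comp_assoc_eq]
  calc _ = (TensorProduct.assoc R A M N).toLinearMap ∘ₗ
          (g.lTensor A ∘ₗ ρ).rTensor N ∘ₗ h.lTensor A ∘ₗ ρ ∘ₗ φ := by
        rw [← comp_assoc φ ρ, lTensor_map_comul_comp_eq hcoassoc]
        simp only [comp_assoc]
    _ = (TensorProduct.assoc R A M N).toLinearMap ∘ₗ
          (g.lTensor A ∘ₗ ρ ∘ₗ φ).rTensor N ∘ₗ h.lTensor A ∘ₗ ρ := by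
        rw [hh, ← comp_assoc _ (φ.rTensor N), ← rTensor_comp]
        simp only [comp_assoc]
    _ = (TensorProduct.assoc R A M N).toLinearMap ∘ₗ (φ.rTensor M).rTensor N ∘ₗ
          (g.lTensor A ∘ₗ ρ).rTensor N ∘ₗ h.lTensor A ∘ₗ ρ := by
        rw [hg, rTensor_comp]
        simp only [comp_assoc]
    _ = _ := by
        rw [lTensor_map_comul_comp_eq hcoassoc, ← comp_assoc _ ((φ.rTensor M).rTensor N), hassoc]
        simp only [comp_assoc]

end Comodule

theorem lTensor_multiProj_comp_comm {A : Type} [AddCommMonoid A] [Module k A]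
    (I : Bool → Submodule k C) {ρ : A →ₗ[k] A ⊗[k] C}
    (hcoassoc : (comul (R := k) (A := C)).lTensor A ∘ₗ ρ
      = (TensorProduct.assoc k A C C).toLinearMap ∘ₗ ρ.rTensor C ∘ₗ ρ)
    {φ : A →ₗ[k] A} (hφ : ∀ i, (I i).mkQ.lTensor A ∘ₗ ρ ∘ₗ φ
      = φ.rTensor (C ⧸ I i) ∘ₗ (I i).mkQ.lTensor A ∘ₗ ρ)
    (i : Bool) (l : List Bool) :
    (multiProj I i l).lTensor A ∘ₗ ρ ∘ₗ φ
      = φ.rTensor (multiTensor k C I i l) ∘ₗ (multiProj I i l).lTensor A ∘ₗ ρ := by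
  induction l generalizing i with
  | nil => exact hφ i
  | cons j l ih => exact lTensor_map_comul_comp_comm hcoassoc (hφ i) (ih j)

theorem coinvariants_of_cogenerating_quotients_general
    {A : Type} [Ring A] [Algebra k A]
    (I : Bool → Submodule k C)
    (ρ : A →ₗ[k] A ⊗[k] C)
    (hcoassoc : (comul (R := k) (A := C)).lTensor A ∘ₗ ρ
      = (TensorProduct.assoc k A C C).toLinearMap ∘ₗ ρ.rTensor C ∘ₗ ρ)
    (hcogen : ∀ x : C, (∀ (i : Bool) (l : List Bool), multiProj I i l x = 0) → x = 0) :
    {b : A | ∀ a : A, ρ (b * a) = (LinearMap.mulLeft k b).rTensor C (ρ a)}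
      = {b : A | ∀ a : A, ((I true).mkQ.lTensor A ∘ₗ ρ) (b * a)
            = (LinearMap.mulLeft k b).rTensor (C ⧸ I true)
                (((I true).mkQ.lTensor A ∘ₗ ρ) a)}
        ∩ {b : A | ∀ a : A, ((I false).mkQ.lTensor A ∘ₗ ρ) (b * a)
            = (LinearMap.mulLeft k b).rTensor (C ⧸ I false)
                (((I false).mkQ.lTensor A ∘ₗ ρ) a)} := by
  ext b
  simp only [Set.mem_inter_iff, Set.mem_ofPred_eq]
  set φ := LinearMap.mulLeft k b
  have hquot : ∀ i, (∀ a, ((I i).mkQ.lTensor A ∘ₗ ρ) (b * a)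
      = φ.rTensor (C ⧸ I i) (((I i).mkQ.lTensor A ∘ₗ ρ) a))
      ↔ (I i).mkQ.lTensor A ∘ₗ ρ ∘ₗ φ = φ.rTensor (C ⧸ I i) ∘ₗ (I i).mkQ.lTensor A ∘ₗ ρ :=
    fun _ ↦ by rw [LinearMap.ext_iff]; rfl
  have hfull : (∀ a, ρ (b * a) = φ.rTensor C (ρ a)) ↔ ρ ∘ₗ φ = φ.rTensor C ∘ₗ ρ := by
    rw [LinearMap.ext_iff]; rfl
  rw [hfull, hquot, hquot]
  constructor
  · intro hb
    constructor <;>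
      rw [hb, ← comp_assoc, lTensor_comp_rTensor, ← rTensor_comp_lTensor, comp_assoc]
  · rintro ⟨htrue, hfalse⟩
    refine LinearMap.ext_of_forall_lTensor_comp_eq (fun p : Bool × List Bool ↦ multiProj I p.1 p.2)
      (fun x hx ↦ hcogen x fun i l ↦ hx (i, l)) fun ⟨i, l⟩ ↦ ?_
    rw [lTensor_multiProj_comp_comm I hcoassoc (Bool.rec hfalse htrue) i l,
      ← comp_assoc, ← comp_assoc, lTensor_comp_rTensor, rTensor_comp_lTensor]

/-- Proposition 5.2: if the quotient coalgebras `C/I₁` and `C/I₂`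
cogenerate `C` (the intersection of the kernels of all the maps `℘_{(i)}` is zero),
then for any algebra `A` and right `C`-comodule structure `ρ` on `A`,
`A^{co C} = A^{co (C/I₁)} ∩ A^{co (C/I₂)}`. -/
theorem coinvariants_of_cogenerating_quotients
    {A : Type} [Ring A] [Algebra k A]
    (I : Bool → Submodule k C)
    (hcoideal : ∀ b : Bool, (∀ x ∈ I b, counit (R := k) x = 0) ∧
      (∀ x ∈ I b, comul (R := k) x ∈
        LinearMap.range ((I b).subtype.lTensor C)
          ⊔ LinearMap.range ((I b).subtype.rTensor C)))
    (ρ : A →ₗ[k] A ⊗[k] C)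
    (hcoassoc : (comul (R := k) (A := C)).lTensor A ∘ₗ ρ
      = (TensorProduct.assoc k A C C).toLinearMap ∘ₗ ρ.rTensor C ∘ₗ ρ)
    (hcounit : (TensorProduct.rid k A).toLinearMap ∘ₗ
        (counit (R := k) (A := C)).lTensor A ∘ₗ ρ = LinearMap.id)
    (hcogen : ∀ x : C, (∀ (i : Bool) (l : List Bool), multiProj I i l x = 0) → x = 0) :
    {b : A | ∀ a : A, ρ (b * a) = (LinearMap.mulLeft k b).rTensor C (ρ a)}
      = {b : A | ∀ a : A, ((I true).mkQ.lTensor A ∘ₗ ρ) (b * a)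
            = (LinearMap.mulLeft k b).rTensor (C ⧸ I true)
                (((I true).mkQ.lTensor A ∘ₗ ρ) a)}
        ∩ {b : A | ∀ a : A, ((I false).mkQ.lTensor A ∘ₗ ρ) (b * a)
            = (LinearMap.mulLeft k b).rTensor (C ⧸ I false)
                (((I false).mkQ.lTensor A ∘ₗ ρ) a)} :=
  coinvariants_of_cogenerating_quotients_general I ρ hcoassoc hcogen
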